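/- arXiv:2403.05825 — 2 statements merged into one kernel-verified Lean document; each statement's English description precedes it below -/
import Mathlib

section
/- Let P be a polymatroid on [n] and a ∈ P a basis. An index i ∈ [n] is externally active with respect to a (i.e., a + e_i − e_j ∉ P for all j < i) if and only if there exists a subset I ⊆ [n] with i = min(I) and I tight for a (Σ_{t∈I} a_t = f(I)). -/
open Finset

/-- The `i`-th standard basis vector in `ℤ^n`. -/
def e {n : ℕ} (i : Fin n) : Fin n → ℤ := fun t => if t = i then 1 else 0

/-- Membership characterization of the polymatroid `P_f`. -/
def IsPolymatroid {n : ℕ} (P : Set (Fin n → ℤ)) (f : Finset (Fin n) → ℤ) : Prop :=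
  (f ∅ = 0) ∧ (∀ I J : Finset (Fin n), f (I ∪ J) + f (I ∩ J) ≤ f I + f J) ∧
    (∀ a : Fin n → ℤ, a ∈ P ↔
      (∀ I : Finset (Fin n), ∑ t ∈ I, a t ≤ f I) ∧ ∑ t, a t = f univ)

/-- `i` is internally active w.r.t. the basis `a` of `P` for the order `lt`. -/
def IntActO {n : ℕ} (P : Set (Fin n → ℤ)) (lt : Fin n → Fin n → Prop)
    (a : Fin n → ℤ) (i : Fin n) : Prop :=
  ∀ j : Fin n, lt j i → a - e i + e j ∉ P

/-- `i` is externally active w.r.t. the basis `a` of `P` for the order `lt`. -/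
def ExtActO {n : ℕ} (P : Set (Fin n → ℤ)) (lt : Fin n → Fin n → Prop)
    (a : Fin n → ℤ) (i : Fin n) : Prop :=
  ∀ j : Fin n, lt j i → a + e i - e j ∉ P

/-- Internal activity for the natural order on `Fin n`. -/
def IntAct {n : ℕ} (P : Set (Fin n → ℤ)) (a : Fin n → ℤ) (i : Fin n) : Prop :=
  IntActO P (· < ·) a i

/-- External activity for the natural order on `Fin n`. -/
def ExtAct {n : ℕ} (P : Set (Fin n → ℤ)) (a : Fin n → ℤ) (i : Fin n) : Prop :=
  ExtActO P (· < ·) a i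

noncomputable def oi {n : ℕ} (P : Set (Fin n → ℤ)) (a : Fin n → ℤ) : ℕ :=
  {i : Fin n | IntAct P a i ∧ ¬ ExtAct P a i}.ncard

noncomputable def oe {n : ℕ} (P : Set (Fin n → ℤ)) (a : Fin n → ℤ) : ℕ :=
  {i : Fin n | ExtAct P a i ∧ ¬ IntAct P a i}.ncard

noncomputable def ie {n : ℕ} (P : Set (Fin n → ℤ)) (a : Fin n → ℤ) : ℕ :=
  {i : Fin n | IntAct P a i ∧ ExtAct P a i}.ncard

/-- The polymatroid Tutte polynomial evaluated at `(x, y)`. -/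
noncomputable def TP {n : ℕ} (P : Set (Fin n → ℤ)) {R : Type*} [CommRing R]
    (x y : R) : R :=
  ∑ᶠ a ∈ P, x ^ oi P a * y ^ oe P a * (x + y - 1) ^ ie P a

lemma sum_e {n : ℕ} (I : Finset (Fin n)) (i : Fin n) :
    ∑ t ∈ I, e i t = if i ∈ I then 1 else 0 := by
  simp [e]

lemma inter_tight {n : ℕ} (f : Finset (Fin n) → ℤ)
    (hsub : ∀ I J : Finset (Fin n), f (I ∪ J) + f (I ∩ J) ≤ f I + f J)
    (a : Fin n → ℤ) (haP : ∀ I : Finset (Fin n), ∑ t ∈ I, a t ≤ f I)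
    (I J : Finset (Fin n)) (hI : ∑ t ∈ I, a t = f I) (hJ : ∑ t ∈ J, a t = f J) :
    ∑ t ∈ I ∩ J, a t = f (I ∩ J) := by
  have h1 := haP (I ∪ J)
  have h2 := haP (I ∩ J)
  have h3 := Finset.sum_union_inter (s₁ := I) (s₂ := J) (f := a)
  have h4 := hsub I J
  linarith

theorem stmt4 {n : ℕ} (P : Set (Fin n → ℤ)) (f : Finset (Fin n) → ℤ)
    (hP : IsPolymatroid P f) (a : Fin n → ℤ) (ha : a ∈ P) (i : Fin n) :
    ExtAct P a i ↔
      ∃ I : Finset (Fin n), (i ∈ I ∧ ∀ t ∈ I, i ≤ t) ∧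
        ∑ t ∈ I, a t = f I := by
  obtain ⟨hf0, hsub, hmem⟩ := hP
  obtain ⟨hbd, htot⟩ := (hmem a).1 ha
  constructor
  · intro hext
    have key : ∀ j : Fin n, j < i → ∃ I : Finset (Fin n),
        i ∈ I ∧ j ∉ I ∧ ∑ t ∈ I, a t = f I := by
      intro j hj
      have hnot := hext j hj
      rw [hmem] at hnot
      have htot' : ∑ t, (a + e i - e j) t = f univ := by
        simp only [Pi.add_apply, Pi.sub_apply, Finset.sum_add_distrib,
          Finset.sum_sub_distrib, sum_e]
        simp [htot]
      have hA : ¬ (∀ I : Finset (Fin n), ∑ t ∈ I, (a + e i - e j) t ≤ f I) :=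
        fun h => hnot ⟨h, htot'⟩
      push_neg at hA
      obtain ⟨I, hI⟩ := hA
      have hIs : ∑ t ∈ I, (a + e i - e j) t
          = ∑ t ∈ I, a t + (if i ∈ I then 1 else 0) - (if j ∈ I then 1 else 0) := by
        simp only [Pi.add_apply, Pi.sub_apply, Finset.sum_add_distrib,
          Finset.sum_sub_distrib, sum_e]
      rw [hIs] at hI
      have hbI := hbd I
      have hbI := hbd I
      by_cases hiI : i ∈ I
      · by_cases hjI : j ∈ I
        · rw [if_pos hiI, if_pos hjI] at hI; exact absurd hI (by linarith)
        · exact ⟨I, hiI, hjI, by rw [if_pos hiI, if_neg hjI] at hI; linarith⟩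
      · rw [if_neg hiI] at hI
        exact absurd hI (by split_ifs <;> linarith)
    choose g hgi hgj hgt using key
    have main : ∀ s : Finset (Fin n), ∃ I : Finset (Fin n),
        i ∈ I ∧ (∀ j ∈ s, j < i → j ∉ I) ∧ ∑ t ∈ I, a t = f I := by
      intro s
      induction s using Finset.induction with
      | empty => exact ⟨univ, mem_univ i, by simp, htot⟩
      | @insert j s hjs ih =>
        obtain ⟨I, hIi, hIj, hIt⟩ := ih
        by_cases hj : j < i
        · refine ⟨I ∩ g j hj, Finset.mem_inter.2 ⟨hIi, hgi j hj⟩, ?_,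
            inter_tight f hsub a hbd I (g j hj) hIt (hgt j hj)⟩
          intro k hk hki hkI
          rw [Finset.mem_inter] at hkI
          rcases Finset.mem_insert.1 hk with rfl | hk'
          · exact hgj k hj hkI.2
          · exact hIj k hk' hki hkI.1
        · refine ⟨I, hIi, ?_, hIt⟩
          intro k hk hki
          rcases Finset.mem_insert.1 hk with rfl | hk'
          · exact absurd hki hj
          · exact hIj k hk' hki
    obtain ⟨I, hIi, hIj, hIt⟩ := main univ
    refine ⟨I, ⟨hIi, fun t ht => ?_⟩, hIt⟩
    by_contra h
    exact hIj t (mem_univ t) (lt_of_not_ge h) ht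
  · rintro ⟨I, ⟨hiI, hmin⟩, htight⟩ j hj hmemP
    rw [hmem] at hmemP
    have hjI : j ∉ I := fun hjI => absurd (hmin j hjI) (not_le.2 hj)
    have hIb := hmemP.1 I
    have hIs : ∑ t ∈ I, (a + e i - e j) t
        = ∑ t ∈ I, a t + (if i ∈ I then 1 else 0) - (if j ∈ I then 1 else 0) := by
      simp only [Pi.add_apply, Pi.sub_apply, Finset.sum_add_distrib,
        Finset.sum_sub_distrib, sum_e]
    rw [hIs, if_pos hiI, if_neg hjI] at hIb
    linarith
end

section
/- Let P be a polymatroid on [n], h ∈ [n−1], and a ∈ P. Define the fiber F_a = {b ∈ P : b_t = a_t for all t ∈ [n]\{h, h+1\}}. Then F_a is an interval: if b, b' ∈ F_a with b_h < b'_h, then b + e_h − e_{h+1} ∈ F_a. In particular F_a = {b^1, …, b^l} with b^{i+1} = b^i + e_h − e_{h+1} for 1 ≤ i ≤ l−1. -/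
open Finset

/-! Moving one unit from coordinate `j` to coordinate `i` of `b` changes the sum over `I` only when
`I` separates `i` from `j`. The only constraint that can then become violated is the one for a set
`I ∋ i` with `j ∉ I`; there `b'` agrees with `b` except at `i`, so `∑_I b + 1 ≤ ∑_I b' ≤ f I`. -/

section

variable {n : ℕ}

lemma sum_add_e_sub_e (b : Fin n → ℤ) (i j : Fin n) (I : Finset (Fin n)) :
    ∑ t ∈ I, (b + e i - e j) t
      = ∑ t ∈ I, b t + (if i ∈ I then 1 else 0) - (if j ∈ I then 1 else 0) := by
  simp only [Pi.sub_apply, Pi.add_apply, sum_sub_distrib, sum_add_distrib, e,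
    sum_ite_eq' I i (fun _ => (1 : ℤ)), sum_ite_eq' I j (fun _ => (1 : ℤ))]

lemma sum_eq_sum_add_sub_of_eq_off_pair {b b' : Fin n → ℤ} {i j : Fin n}
    (hbb' : ∀ t, t ≠ i → t ≠ j → b t = b' t) {I : Finset (Fin n)} (hi : i ∈ I) (hj : j ∉ I) :
    ∑ t ∈ I, b' t = ∑ t ∈ I, b t + (b' i - b i) := by
  have hdiff : ∑ t ∈ I, (b' t - b t) = b' i - b i :=
    sum_eq_single_of_mem i hi fun t htI hti => by
      rw [hbb' t hti (ne_of_mem_of_not_mem htI hj), sub_self]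
  rw [← hdiff, sum_sub_distrib]
  ring

lemma add_e_sub_e_apply_of_ne (b : Fin n → ℤ) {i j t : Fin n} (hi : t ≠ i) (hj : t ≠ j) :
    (b + e i - e j) t = b t := by
  simp [e, hi, hj]

theorem IsPolymatroid.add_e_sub_e_mem {P : Set (Fin n → ℤ)} {f : Finset (Fin n) → ℤ}
    (hP : IsPolymatroid P f) {b b' : Fin n → ℤ} (hb : b ∈ P) (hb' : b' ∈ P) {i j : Fin n}
    (hbb' : ∀ t, t ≠ i → t ≠ j → b t = b' t) (hlt : b i < b' i) :
    b + e i - e j ∈ P := by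
  obtain ⟨-, -, hmem⟩ := hP
  obtain ⟨hbI, hbS⟩ := (hmem b).1 hb
  obtain ⟨hb'I, -⟩ := (hmem b').1 hb'
  refine (hmem _).2 ⟨fun I => ?_, ?_⟩
  · rw [sum_add_e_sub_e]
    by_cases hi : i ∈ I <;> by_cases hj : j ∈ I <;> simp only [hi, hj, if_true, if_false]
    · simpa using hbI I
    · have := sum_eq_sum_add_sub_of_eq_off_pair hbb' hi hj
      linarith [hb'I I]
    · linarith [hbI I]
    · simpa using hbI I
  · rw [sum_add_e_sub_e]
    simp [hbS]

end

theorem stmt16_general {n : ℕ} (P : Set (Fin n → ℤ)) (f : Finset (Fin n) → ℤ)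
    (hP : IsPolymatroid P f) (h h' : Fin n)
    (a : Fin n → ℤ)
    (F : Set (Fin n → ℤ))
    (hF : F = {b ∈ P | ∀ t : Fin n, t ≠ h → t ≠ h' → b t = a t})
    (b b' : Fin n → ℤ) (hb : b ∈ F) (hb' : b' ∈ F) (hlt : b h < b' h) :
    b + e h - e h' ∈ F := by
  subst hF
  obtain ⟨hbP, hba⟩ := hb
  obtain ⟨hb'P, hb'a⟩ := hb'
  refine ⟨hP.add_e_sub_e_mem hbP hb'P (fun t hh hh' => ?_) hlt, fun t hh hh' => ?_⟩
  · rw [hba t hh hh', hb'a t hh hh']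
  · rw [add_e_sub_e_apply_of_ne b hh hh', hba t hh hh']

theorem stmt16 {n : ℕ} (P : Set (Fin n → ℤ)) (f : Finset (Fin n) → ℤ)
    (hP : IsPolymatroid P f) (h h' : Fin n) (hh' : (h' : ℕ) = (h : ℕ) + 1)
    (a : Fin n → ℤ) (ha : a ∈ P)
    (F : Set (Fin n → ℤ))
    (hF : F = {b ∈ P | ∀ t : Fin n, t ≠ h → t ≠ h' → b t = a t})
    (b b' : Fin n → ℤ) (hb : b ∈ F) (hb' : b' ∈ F) (hlt : b h < b' h) :
    b + e h - e h' ∈ F :=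
  stmt16_general P f hP h h' a F hF b b' hb hb' hlt
end
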